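/- arXiv:2003.13041 — 3 statements merged into one kernel-verified Lean document; each statement's English description precedes it below -/
import Mathlib

section
/- Let Z(m) = V(1) + ⋯ + V(m) be a random walk on ℝ² whose i.i.d. increments V(s) have a radial, non-increasing probability density. Then for every m ≥ 1, the density p^{Z(m)} of Z(m) is radial and non-increasing; in particular, for all x, x' ∈ ℝ² with ‖x‖ ≤ ‖x'‖, p^{Z(m)}(x') ≤ p^{Z(m)}(x), and p^{Z(m)}(x) ≤ 1/(π‖x‖²) for x ≠ 0. -/
/-!
Let `f, g ≥ 0` be radial and non-increasing, and `‖u‖ ≤ ‖v‖`. The reflection `σ` across the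
perpendicular bisector of `u` and `v` swaps them and preserves Lebesgue measure, so pairing `y`
with `σ y` turns `(f ⋆ g) u - (f ⋆ g) v` into the integral of
`(f (u - y) - f (v - y)) * (g y - g (σ y)) / 2`. Both factors have the sign of
`‖v - y‖ - ‖u - y‖`: for the second one because the origin lies on the side of `u`.
Hence convolution preserves radial non-increasing probability densities, and for such a density
`q` on the plane, `π ‖x‖² q x ≤ ∫ q = 1`, as `q ≥ q x` on the disc of radius `‖x‖`.
-/

open MeasureTheory Metric Submodule
open scoped Convolution
open scoped RealInnerProductSpace

def RadiallyAntitone {E β : Type*} [Norm E] [Preorder β] (f : E → β) : Prop :=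
  ∀ ⦃x y : E⦄, ‖x‖ ≤ ‖y‖ → f y ≤ f x

namespace RadiallyAntitone

variable {E β : Type*}

theorem apply_eq_of_norm_eq [Norm E] [PartialOrder β] {f : E → β} (hf : RadiallyAntitone f)
    {x y : E} (h : ‖x‖ = ‖y‖) : f x = f y :=
  le_antisymm (hf h.ge) (hf h.le)

theorem of_antitoneOn [SeminormedAddGroup E] [Preorder β] {f : E → β} {φ : ℝ → β}
    (hφ : AntitoneOn φ (Set.Ici 0)) (hf : ∀ x, f x = φ ‖x‖) : RadiallyAntitone f := by
  intro x y h
  rw [hf, hf]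
  exact hφ (norm_nonneg x) (norm_nonneg y) h

theorem exists_antitoneOn [NormedAddCommGroup E] [NormedSpace ℝ E] [Nontrivial E] [PartialOrder β]
    {f : E → β} (hf : RadiallyAntitone f) :
    ∃ φ : ℝ → β, (∀ x, f x = φ ‖x‖) ∧ AntitoneOn φ (Set.Ici 0) := by
  obtain ⟨e, he⟩ := exists_norm_eq E zero_le_one
  have norm_smul_e {r : ℝ} (hr : 0 ≤ r) : ‖r • e‖ = r := by
    rw [norm_smul, he, mul_one, Real.norm_of_nonneg hr]
  refine ⟨fun r => f (r • e), fun x => hf.apply_eq_of_norm_eq ?_, fun r hr s hs hrs => hf ?_⟩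
  · rw [norm_smul_e (norm_nonneg x)]
  · rwa [norm_smul_e hr, norm_smul_e hs]

theorem integrable_mul_comp_sub {G : Type*} [NormedAddCommGroup G] [MeasurableSpace G]
    [BorelSpace G] {μ : Measure G} [μ.IsAddLeftInvariant] [μ.IsNegInvariant]
    {f g : G → ℝ} (hf0 : 0 ≤ f) (hf : RadiallyAntitone f) (hfm : AEStronglyMeasurable f μ)
    (hg : Integrable g μ) (x : G) : Integrable (fun y => f (x - y) * g y) μ := by
  refine hg.bdd_mul (c := f 0) ?_ (.of_forall fun y => ?_)
  · exact hfm.comp_measurePreserving (Measure.measurePreserving_sub_left μ x)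
  · rw [Real.norm_of_nonneg (hf0 _)]
    exact hf (by simp)

theorem measureReal_ball_mul_le_integral {G : Type*} [SeminormedAddCommGroup G] [MeasurableSpace G]
    [OpensMeasurableSpace G] [ProperSpace G] {μ : Measure G} [IsFiniteMeasureOnCompacts μ]
    {f : G → ℝ} (hf0 : 0 ≤ f) (hf : RadiallyAntitone f) (hfi : Integrable f μ) (x : G) :
    μ.real (ball 0 ‖x‖) * f x ≤ ∫ y, f y ∂μ :=
  calc μ.real (ball 0 ‖x‖) * f x = ∫ _ in ball 0 ‖x‖, f x ∂μ := by
        rw [setIntegral_const, smul_eq_mul]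
    _ ≤ ∫ y in ball 0 ‖x‖, f y ∂μ :=
        setIntegral_mono_on (integrableOn_const measure_ball_lt_top.ne) hfi.integrableOn
          measurableSet_ball fun y hy => hf (mem_ball_zero_iff.mp hy).le
    _ ≤ ∫ y, f y ∂μ := setIntegral_le_integral hfi (.of_forall hf0)

end RadiallyAntitone

section BisectorReflection

variable {E : Type*} [NormedAddCommGroup E] [InnerProductSpace ℝ E]

/-- The reflection across the perpendicular bisector of the segment `[u, v]`. -/
noncomputable def bisectorReflection (u v y : E) : E := v + reflection (ℝ ∙ (v - u))ᗮ (y - u)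

theorem bisectorReflection_apply (u v y : E) :
    bisectorReflection u v y = y + (1 - 2 * ⟪v - u, y - u⟫ / ‖v - u‖ ^ 2) • (v - u) := by
  rw [bisectorReflection, reflection_orthogonal_apply, reflection_singleton_apply]
  simp only [RCLike.ofReal_real_eq_id, id]
  module

theorem norm_sub_bisectorReflection_left (u v y : E) :
    ‖u - bisectorReflection u v y‖ = ‖v - y‖ := by
  have : u - bisectorReflection u v y = reflection (ℝ ∙ (v - u))ᗮ (v - y) := by
    rw [show v - y = (v - u) - (y - u) by abel, map_sub,
      reflection_orthogonalComplement_singleton_eq_neg, bisectorReflection]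
    abel
  rw [this, LinearIsometryEquiv.norm_map]

theorem norm_sub_bisectorReflection_right (u v y : E) :
    ‖v - bisectorReflection u v y‖ = ‖u - y‖ := by
  rw [bisectorReflection, sub_add_cancel_left, norm_neg, LinearIsometryEquiv.norm_map, norm_sub_rev]

theorem norm_bisectorReflection_sq_sub_norm_sq (u v y : E) :
    ‖v - u‖ ^ 2 * (‖bisectorReflection u v y‖ ^ 2 - ‖y‖ ^ 2) =
      (‖v - y‖ ^ 2 - ‖u - y‖ ^ 2) * (‖v‖ ^ 2 - ‖u‖ ^ 2) := by
  obtain ⟨w, rfl⟩ : ∃ w, v = u + w := ⟨v - u, by abel⟩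
  obtain ⟨a, rfl⟩ : ∃ a, y = u + a := ⟨y - u, by abel⟩
  rcases eq_or_ne w 0 with rfl | hw
  · simp
  have hw2 : ‖w‖ ^ 2 ≠ 0 := by positivity
  rw [bisectorReflection_apply]
  simp only [add_sub_cancel_left, add_sub_add_left_eq_sub, sub_add_cancel_left, norm_neg,
    norm_add_sq_real, norm_sub_sq_real, inner_add_left, inner_smul_right, norm_smul, mul_pow,
    Real.norm_eq_abs, sq_abs]
  rw [real_inner_comm a w]
  field_simp
  ring

theorem measurableEmbedding_bisectorReflection [MeasurableSpace E] [BorelSpace E] (u v : E) :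
    MeasurableEmbedding (bisectorReflection u v) :=
  (Homeomorph.addLeft v).measurableEmbedding.comp
    ((reflection (ℝ ∙ (v - u))ᗮ).toHomeomorph.measurableEmbedding.comp
      (Homeomorph.subRight u).measurableEmbedding)

theorem measurePreserving_bisectorReflection [FiniteDimensional ℝ E] [MeasurableSpace E]
    [BorelSpace E] (u v : E) : MeasurePreserving (bisectorReflection u v) :=
  (measurePreserving_add_left volume v).comp
    ((reflection (ℝ ∙ (v - u))ᗮ).measurePreserving.comp (measurePreserving_sub_right volume u))

end BisectorReflection

section

variable {E : Type*} [NormedAddCommGroup E] [InnerProductSpace ℝ E]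
  {f g : E → ℝ} {u v : E}

theorem RadiallyAntitone.mul_sub_bisectorReflection_nonneg (hf : RadiallyAntitone f)
    (hg : RadiallyAntitone g) (huv : ‖u‖ ≤ ‖v‖) (y : E) :
    0 ≤ (f (u - y) - f (v - y)) * (g y - g (bisectorReflection u v y)) := by
  rcases eq_or_ne u v with rfl | huv'
  · simp
  have hw : 0 < ‖v - u‖ ^ 2 := by
    have : v - u ≠ 0 := sub_ne_zero.mpr huv'.symm
    positivity
  have hσ := norm_bisectorReflection_sq_sub_norm_sq u v y
  have hnorm : 0 ≤ ‖v‖ ^ 2 - ‖u‖ ^ 2 := by nlinarith [norm_nonneg u]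
  rcases le_total ‖u - y‖ ‖v - y‖ with h | h
  · have : ‖y‖ ≤ ‖bisectorReflection u v y‖ := by
      refine (pow_le_pow_iff_left₀ (norm_nonneg _) (norm_nonneg _) two_ne_zero).mp ?_
      nlinarith [mul_nonneg (sub_nonneg.mpr (pow_le_pow_left₀ (norm_nonneg _) h 2)) hnorm]
    exact mul_nonneg (sub_nonneg.mpr (hf h)) (sub_nonneg.mpr (hg this))
  · have : ‖bisectorReflection u v y‖ ≤ ‖y‖ := by
      refine (pow_le_pow_iff_left₀ (norm_nonneg _) (norm_nonneg _) two_ne_zero).mp ?_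
      nlinarith [mul_nonneg (sub_nonneg.mpr (pow_le_pow_left₀ (norm_nonneg _) h 2)) hnorm]
    exact mul_nonneg_of_nonpos_of_nonpos (sub_nonpos.mpr (hf h)) (sub_nonpos.mpr (hg this))

variable [FiniteDimensional ℝ E] [MeasurableSpace E] [BorelSpace E]

theorem RadiallyAntitone.integral_mul_comp_sub_le (hf : RadiallyAntitone f)
    (hg : RadiallyAntitone g) (huv : ‖u‖ ≤ ‖v‖)
    (hu : Integrable fun y => f (u - y) * g y) (hv : Integrable fun y => f (v - y) * g y) :
    ∫ y, f (v - y) * g y ≤ ∫ y, f (u - y) * g y := by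
  set σ := bisectorReflection u v
  set F : E → ℝ := fun y => f (u - y) * g y - f (v - y) * g y
  have hF : Integrable F := hu.sub hv
  have hFσ : Integrable fun y => F (σ y) :=
    ((measurePreserving_bisectorReflection u v).integrable_comp_emb
      (measurableEmbedding_bisectorReflection u v)).mpr hF
  have hpair (y : E) : F y + F (σ y) = (f (u - y) - f (v - y)) * (g y - g (σ y)) := by
    simp only [F, σ, hf.apply_eq_of_norm_eq (norm_sub_bisectorReflection_left u v y),
      hf.apply_eq_of_norm_eq (norm_sub_bisectorReflection_right u v y)]
    ring
  have hFσ_eq : ∫ y, F (σ y) = ∫ y, F y :=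
    (measurePreserving_bisectorReflection u v).integral_comp
      (measurableEmbedding_bisectorReflection u v) F
  have hF_nonneg : 0 ≤ ∫ y, F y := by
    have h : 0 ≤ ∫ y, (F y + F (σ y)) := integral_nonneg fun y =>
      (hpair y).symm ▸ hf.mul_sub_bisectorReflection_nonneg hg huv y
    rw [integral_add hF hFσ, hFσ_eq] at h
    linarith
  rw [integral_sub hu hv] at hF_nonneg
  linarith

theorem RadiallyAntitone.convolution (hf0 : 0 ≤ f) (hf : RadiallyAntitone f)
    (hfm : AEStronglyMeasurable f) (hg : RadiallyAntitone g) (hgi : Integrable g) :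
    RadiallyAntitone (f ⋆[ContinuousLinearMap.mul ℝ ℝ] g) := fun u v huv => by
  simp only [convolution_mul_swap]
  exact hf.integral_mul_comp_sub_le hg huv (hf.integrable_mul_comp_sub hf0 hfm hgi u)
    (hf.integrable_mul_comp_sub hf0 hfm hgi v)

end

/-- Let `Z(m) = V(1) + ⋯ + V(m)` be a random walk on `ℝ²` whose i.i.d. increments have
a radial, non-increasing probability density `p`. The density `q m` of `Z(m)` is the
`m`-fold convolution of `p`. Then for every `m ≥ 1` the density `q m` is radial and
non-increasing; in particular `q m x' ≤ q m x` whenever `‖x‖ ≤ ‖x'‖`, and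
`q m x ≤ 1/(π ‖x‖²)` for `x ≠ 0`. -/
theorem stmt_3 (p : EuclideanSpace ℝ (Fin 2) → ℝ)
    (hnonneg : ∀ x, 0 ≤ p x) (hint : Integrable p volume) (hprob : ∫ x, p x = 1)
    (ptilde : ℝ → ℝ) (hrad : ∀ x, p x = ptilde ‖x‖)
    (hmono : AntitoneOn ptilde (Set.Ici 0))
    (q : ℕ → EuclideanSpace ℝ (Fin 2) → ℝ)
    (hq1 : q 1 = p)
    (hqconv : ∀ m, 1 ≤ m → ∀ x, q (m + 1) x = ∫ y, q m (x - y) * p y) :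
    ∀ m, 1 ≤ m →
      (∃ qtilde : ℝ → ℝ, (∀ x, q m x = qtilde ‖x‖) ∧ AntitoneOn qtilde (Set.Ici 0)) ∧
      (∀ x x' : EuclideanSpace ℝ (Fin 2), ‖x‖ ≤ ‖x'‖ → q m x' ≤ q m x) ∧
      (∀ x : EuclideanSpace ℝ (Fin 2), x ≠ 0 → q m x ≤ 1 / (Real.pi * ‖x‖ ^ 2)) := by
  have hp : RadiallyAntitone p := .of_antitoneOn hmono hrad
  have hdensity : ∀ m, 1 ≤ m →
      0 ≤ q m ∧ RadiallyAntitone (q m) ∧ Integrable (q m) ∧ ∫ x, q m x = 1 := by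
    intro m hm
    induction m, hm using Nat.le_induction with
    | base => exact hq1 ▸ ⟨hnonneg, hp, hint, hprob⟩
    | succ n hn ih =>
      obtain ⟨hq0, hqrad, hqi, hqmass⟩ := ih
      have hconv : q (n + 1) = q n ⋆[ContinuousLinearMap.mul ℝ ℝ] p :=
        funext fun x => (hqconv n hn x).trans convolution_mul_swap.symm
      refine hconv ▸ ⟨fun x => ?_, hqrad.convolution hq0 hqi.aestronglyMeasurable hp hint,
        hqi.integrable_convolution _ hint, ?_⟩
      · rw [convolution_mul_swap]
        exact integral_nonneg fun y => mul_nonneg (hq0 _) (hnonneg y)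
      · rw [integral_convolution _ hqi hint, hqmass, hprob, ContinuousLinearMap.mul_apply', one_mul]
  intro m hm
  obtain ⟨hq0, hqrad, hqi, hqmass⟩ := hdensity m hm
  refine ⟨hqrad.exists_antitoneOn, fun x x' h => hqrad h, fun x hx => ?_⟩
  have hball := hqrad.measureReal_ball_mul_le_integral hq0 hqi x
  rw [hqmass, measureReal_def, EuclideanSpace.volume_ball_fin_two, ENNReal.toReal_mul,
    ENNReal.toReal_pow, ENNReal.toReal_ofReal (norm_nonneg x),
    ENNReal.toReal_ofReal Real.pi_nonneg] at hball
  rw [le_div_iff₀ (by positivity)]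
  linarith
end

section
/- Let Z be a random walk on ℝ² whose step lengths satisfy: the probability that a single step has length at least 2d is at least a/(6d) for every d ∈ [1, ℓ_max/3] (as holds for the Cauchy step distribution with cutoff ℓ_max). Then for any integer m ≥ 2 and any d ∈ [1, ℓ_max/3], the probability that there exists s ≤ m with ‖Z(s)‖ ≥ d is at least 1 − e^{−c m/d}, for some constant c > 0 depending only on a. -/
open MeasureTheory ProbabilityTheory

/-!
If the walk stays in the open ball of radius `d` up to time `m`, then by the triangle inequality
every step `V i = Z (i+1) - Z i` with `i < m` is shorter than `2d`. By independence this has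
probability `(1 - q)^m ≤ exp (-q m)`, where `q ≥ a/(6d)` is the probability of a single step of
length at least `2d`; so `c = a/6` works.
-/

open Finset

lemma le_max_norm_sum_range_of_two_mul_le_norm {E : Type*} [SeminormedAddCommGroup E]
    (V : ℕ → E) {d : ℝ} {i : ℕ} (h : 2 * d ≤ ‖V i‖) :
    d ≤ max ‖∑ j ∈ range i, V j‖ ‖∑ j ∈ range (i + 1), V j‖ := by
  have hstep : ‖V i‖ ≤ ‖∑ j ∈ range (i + 1), V j‖ + ‖∑ j ∈ range i, V j‖ := by
    simpa [sum_range_succ] using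
      norm_sub_le (∑ j ∈ range (i + 1), V j) (∑ j ∈ range i, V j)
  linarith [le_max_left ‖∑ j ∈ range i, V j‖ ‖∑ j ∈ range (i + 1), V j‖,
    le_max_right ‖∑ j ∈ range i, V j‖ ‖∑ j ∈ range (i + 1), V j‖]

lemma measure_biInter_range_preimage_eq_pow {Ω E : Type*} [MeasurableSpace Ω]
    [MeasurableSpace E] {μ : Measure Ω} {V : ℕ → Ω → E} (hindep : iIndepFun V μ)
    (hident : ∀ i, IdentDistrib (V i) (V 0) μ μ) {T : Set E} (hT : MeasurableSet T) (m : ℕ) :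
    μ (⋂ i ∈ range m, V i ⁻¹' T) = μ (V 0 ⁻¹' T) ^ m := by
  rw [hindep.meas_biInter fun i _ ↦ ⟨T, hT, rfl⟩]
  simp [(hident _).measure_mem_eq hT]

lemma pow_le_exp_neg_mul_of_le_one_sub {x p : ℝ} (hx : 0 ≤ x) (hxp : x ≤ 1 - p) (m : ℕ) :
    x ^ m ≤ Real.exp (-p * m) :=
  calc x ^ m ≤ Real.exp (-p) ^ m := by
        gcongr
        linarith [Real.add_one_le_exp (-p)]
    _ = Real.exp (-p * m) := by rw [← Real.exp_nat_mul]; ring_nf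

/-- Let `Z(s) = V(1)+⋯+V(s)` be a random walk on `ℝ²` with i.i.d. steps such that the
probability that a single step has length at least `2d` is at least `a/(6d)` for every
`d ∈ [1, ℓ_max/3]`. Then there is a constant `c > 0` depending only on `a` such that
for any integer `m ≥ 2` and any `d ∈ [1, ℓ_max/3]`, the probability that some `s ≤ m`
has `‖Z(s)‖ ≥ d` is at least `1 − e^{−c m/d}`. -/
theorem stmt_9 (a : ℝ) (ha : 0 < a) :
    ∃ c : ℝ, 0 < c ∧
      ∀ {Ω : Type} [MeasurableSpace Ω] (μ : Measure Ω), IsProbabilityMeasure μ →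
      ∀ (lmax : ℝ) (V : ℕ → Ω → EuclideanSpace ℝ (Fin 2)),
        (∀ s, Measurable (V s)) →
        iIndepFun V μ →
        (∀ s, IdentDistrib (V s) (V 0) μ μ) →
        (∀ d : ℝ, 1 ≤ d → d ≤ lmax / 3 →
          ENNReal.ofReal (a / (6 * d)) ≤ μ {ω | 2 * d ≤ ‖V 0 ω‖}) →
        ∀ Z : ℕ → Ω → EuclideanSpace ℝ (Fin 2),
          (∀ s ω, Z s ω = ∑ i ∈ Finset.range s, V i ω) →
          ∀ m : ℕ, 2 ≤ m → ∀ d : ℝ, 1 ≤ d → d ≤ lmax / 3 →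
            1 - Real.exp (-c * m / d) ≤
              (μ {ω | ∃ s ≤ m, d ≤ ‖Z s ω‖}).toReal := by
  refine ⟨a / 6, by positivity, ?_⟩
  intro Ω _ μ _ lmax V hVmeas hVindep hVident hstep Z hZ m _ d hd1 hdmax
  set S : Set (EuclideanSpace ℝ (Fin 2)) := {x | 2 * d ≤ ‖x‖}
  have hS : MeasurableSet S := measurableSet_le measurable_const measurable_norm
  set B := ⋂ i ∈ range m, V i ⁻¹' Sᶜ
  have hbig : a / (6 * d) ≤ μ.real (V 0 ⁻¹' S) :=
    (ENNReal.ofReal_le_iff_le_toReal (measure_ne_top _ _)).1 (hstep d hd1 hdmax)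
  have hsmall : μ.real (V 0 ⁻¹' Sᶜ) ≤ 1 - a / (6 * d) := by
    rw [Set.preimage_compl, probReal_compl_eq_one_sub (hVmeas 0 hS)]
    linarith
  have hB : μ.real B ≤ Real.exp (-(a / 6) * m / d) := by
    rw [measureReal_def, measure_biInter_range_preimage_eq_pow hVindep hVident hS.compl,
      ENNReal.toReal_pow, ← measureReal_def]
    refine (pow_le_exp_neg_mul_of_le_one_sub measureReal_nonneg hsmall m).trans_eq ?_
    congr 1
    field_simp
  have hescape : Bᶜ ⊆ {ω | ∃ s ≤ m, d ≤ ‖Z s ω‖} := by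
    intro ω hω
    obtain ⟨i, hi, hiS⟩ : ∃ i < m, 2 * d ≤ ‖V i ω‖ := by
      simpa [B, S] using hω
    rcases le_max_iff.1 (le_max_norm_sum_range_of_two_mul_le_norm (V · ω) hiS) with h | h
    · exact ⟨i, hi.le, by rwa [hZ]⟩
    · exact ⟨i + 1, hi, by rwa [hZ]⟩
  have hBmeas : MeasurableSet B :=
    .biInter (Set.to_countable _) fun i _ ↦ hVmeas i hS.compl
  calc 1 - Real.exp (-(a / 6) * m / d) ≤ μ.real Bᶜ := by
        rw [probReal_compl_eq_one_sub hBmeas]; linarith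
    _ ≤ (μ {ω | ∃ s ≤ m, d ≤ ‖Z s ω‖}).toReal := measureReal_mono hescape
end

section
/- Let V = (V₁, V₂) be an isotropic random vector in ℝ² whose length has the Lévy density with exponent μ ∈ (1,3] and cutoff ℓ_max (possibly infinite). Then the density of |V₁| satisfies p^{|V₁|}(x) = Θ(x^{-μ}) for x ∈ (1, ℓ_max/2), i.e., the projection of a two-dimensional Lévy step on a coordinate axis is again Lévy-distributed with the same exponent μ. -/
open MeasureTheory intervalIntegral

/-!
For `x₁ > 1` every point `(x₁, x₂)` of the chord `|x₂| < √(ℓ_max² − x₁²)` has radius in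
`(1, ℓ_max)`, so there `p^V = a/(2π) · ‖x‖^{−(μ+1)}` and the marginal is `a/π` times
`∫₀^X (x₁² + t²)^{−(μ+1)/2} dt` with `X ≥ x₁`. On `[0, x₁]` the integrand is comparable to
`x₁^{−(μ+1)}`, which gives the lower bound `≍ x₁^{−μ}`; on `[x₁, X]` it is at most `t^{−(μ+1)}`,
whose integral is at most `x₁^{−μ}/μ`. Finally the normalising constant `a` lies between
`(μ − 1)/μ` and `1`, uniformly in `ℓ_max`.
-/

theorem integral_rpow_le_of_lt_neg_one {s c d : ℝ} (hs : s < -1) (hc : 0 < c) (hcd : c ≤ d) :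
    ∫ t in c..d, t ^ s ≤ c ^ (s + 1) / -(s + 1) := by
  have h0 : (0 : ℝ) ∉ Set.uIcc c d := by
    rw [Set.uIcc_of_le hcd]
    exact fun h => hc.not_ge h.1
  rw [integral_rpow (Or.inr ⟨hs.ne, h0⟩), div_neg, ← neg_div]
  have hd : 0 ≤ d ^ (s + 1) := Real.rpow_nonneg (hc.le.trans hcd) _
  exact div_le_div_of_nonpos_of_le (by linarith) (by linarith)

theorem one_add_integral_rpow_inv_bounds {μ L : ℝ} (hμ : 1 < μ) (hL : 1 ≤ L) :
    (μ - 1) / μ ≤ (1 + ∫ t in (1)..L, t ^ (-μ))⁻¹ ∧ (1 + ∫ t in (1)..L, t ^ (-μ))⁻¹ ≤ 1 := by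
  have hI0 : 0 ≤ ∫ t in (1)..L, t ^ (-μ) :=
    integral_nonneg hL fun t ht => Real.rpow_nonneg (zero_le_one.trans ht.1) _
  have hI : ∫ t in (1)..L, t ^ (-μ) ≤ 1 / (μ - 1) := by
    have := integral_rpow_le_of_lt_neg_one (s := -μ) (by linarith) one_pos hL
    rwa [Real.one_rpow, neg_add, neg_neg, ← sub_eq_add_neg] at this
  refine ⟨?_, inv_le_one_of_one_le₀ (by linarith)⟩
  have hμ1 : μ - 1 ≠ 0 := by linarith
  rw [show (μ - 1) / μ = (1 + 1 / (μ - 1))⁻¹ by rw [one_add_div hμ1, inv_div, sub_add_cancel]]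
  exact inv_anti₀ (by positivity) (by linarith)

theorem radial_levy_density_div_eq {μ a lmax r : ℝ} (h1 : 1 < r) (hr : r < lmax) :
    (if r < 0 then 0 else if r ≤ 1 then a else if r < lmax then a * r ^ (-μ) else 0) /
      (2 * Real.pi * r) = a / (2 * Real.pi) * r ^ (-(μ + 1)) := by
  have hr0 : 0 < r := by linarith
  rw [if_neg (by linarith), if_neg h1.not_ge, if_pos hr,
    show -μ = 1 + -(μ + 1) by ring, Real.rpow_add hr0, Real.rpow_one]
  field_simp

section ChordIntegral

variable {μ x X : ℝ}

theorem intervalIntegrable_sqrt_sq_add_sq_rpow (hx : x ≠ 0) (s a b : ℝ) :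
    IntervalIntegrable (fun t => √(x ^ 2 + t ^ 2) ^ s) volume a b := by
  refine Continuous.intervalIntegrable ?_ a b
  refine (by fun_prop : Continuous fun t : ℝ => √(x ^ 2 + t ^ 2)).rpow_const fun t => Or.inl ?_
  exact (Real.sqrt_pos.2 (by positivity)).ne'

theorem sqrt_two_rpow_mul_rpow_le_integral (hμ : -1 ≤ μ) (hx : 0 < x) (hxX : x ≤ X) :
    √2 ^ (-(μ + 1)) * x ^ (-μ) ≤ ∫ t in (0)..X, √(x ^ 2 + t ^ 2) ^ (-(μ + 1)) := by
  have hint := intervalIntegrable_sqrt_sq_add_sq_rpow hx.ne' (-(μ + 1))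
  have hchord : ∫ t in (0)..x, √(x ^ 2 + t ^ 2) ^ (-(μ + 1))
      ≤ ∫ t in (0)..X, √(x ^ 2 + t ^ 2) ^ (-(μ + 1)) :=
    integral_mono_interval le_rfl hx.le hxX
      (ae_of_all _ fun t => Real.rpow_nonneg (Real.sqrt_nonneg _) _) (hint 0 X)
  refine le_trans ?_ hchord
  have hconst : ∫ _ in (0)..x, (√2 * x) ^ (-(μ + 1))
      ≤ ∫ t in (0)..x, √(x ^ 2 + t ^ 2) ^ (-(μ + 1)) := by
    refine integral_mono_on hx.le intervalIntegrable_const (hint 0 x) fun t ht => ?_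
    refine Real.rpow_le_rpow_of_nonpos (Real.sqrt_pos.2 (by positivity)) ?_ (by linarith)
    rw [Real.sqrt_le_iff, mul_pow, Real.sq_sqrt zero_le_two]
    exact ⟨by positivity, by nlinarith [ht.1, ht.2]⟩
  rw [show -μ = 1 + -(μ + 1) by ring, Real.rpow_add hx, Real.rpow_one]
  rwa [intervalIntegral.integral_const, smul_eq_mul, sub_zero, Real.mul_rpow (by positivity) hx.le,
    mul_left_comm] at hconst

theorem integral_sqrt_sq_add_sq_rpow_le (hμ : 0 < μ) (hx : 0 < x) (hxX : x ≤ X) :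
    ∫ t in (0)..X, √(x ^ 2 + t ^ 2) ^ (-(μ + 1)) ≤ (1 + 1 / μ) * x ^ (-μ) := by
  have hint := intervalIntegrable_sqrt_sq_add_sq_rpow hx.ne' (-(μ + 1))
  have hnear : ∫ t in (0)..x, √(x ^ 2 + t ^ 2) ^ (-(μ + 1)) ≤ x ^ (-μ) := by
    have h := integral_mono_on hx.le (hint 0 x) (intervalIntegrable_const (c := x ^ (-(μ + 1))))
      fun t _ => Real.rpow_le_rpow_of_nonpos hx
        ((Real.le_sqrt hx.le (by positivity)).2 (by nlinarith)) (by linarith)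
    rwa [intervalIntegral.integral_const, smul_eq_mul, sub_zero,
      ← Real.rpow_one_add' hx.le (by linarith), show 1 + -(μ + 1) = -μ by ring] at h
  have hfar : ∫ t in x..X, √(x ^ 2 + t ^ 2) ^ (-(μ + 1)) ≤ x ^ (-μ) / μ := by
    have htail := integral_rpow_le_of_lt_neg_one (s := -(μ + 1)) (by linarith) hx hxX
    rw [show -(μ + 1) + 1 = -μ by ring, neg_neg] at htail
    refine le_trans (integral_mono_on hxX (hint x X) ?_ fun t ht => ?_) htail
    · exact intervalIntegrable_rpow (Or.inr fun h => hx.not_ge (Set.uIcc_of_le hxX ▸ h).1)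
    · exact Real.rpow_le_rpow_of_nonpos (hx.trans_le ht.1)
        ((Real.le_sqrt (hx.le.trans ht.1) (by positivity)).2 (by nlinarith)) (by linarith)
  rw [← integral_add_adjacent_intervals (hint 0 x) (hint x X)]
  calc _ ≤ x ^ (-μ) + x ^ (-μ) / μ := add_le_add hnear hfar
    _ = (1 + 1 / μ) * x ^ (-μ) := by ring

end ChordIntegral

theorem stmt_11_general (μ : ℝ) (hμ1 : 1 < μ) :
    ∃ c₁ c₂ : ℝ, 0 < c₁ ∧ 0 < c₂ ∧
      ∀ (lmax : ℝ), 2 < lmax →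
      ∀ a : ℝ, a = (1 + ∫ t in (1)..lmax, t ^ (-μ))⁻¹ →
      ∀ pmu : ℝ → ℝ, (∀ ℓ : ℝ, pmu ℓ =
          if ℓ < 0 then 0 else if ℓ ≤ 1 then a
            else if ℓ < lmax then a * ℓ ^ (-μ) else 0) →
      ∀ pV : ℝ → ℝ → ℝ, (∀ x₁ x₂ : ℝ, pV x₁ x₂ =
          pmu (Real.sqrt (x₁ ^ 2 + x₂ ^ 2)) /
            (2 * Real.pi * Real.sqrt (x₁ ^ 2 + x₂ ^ 2))) →
      ∀ marg : ℝ → ℝ, (∀ x₁ : ℝ, marg x₁ =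
          2 * ∫ x₂ in (0)..Real.sqrt (lmax ^ 2 - x₁ ^ 2), pV x₁ x₂) →
      ∀ x₁ : ℝ, 1 < x₁ → x₁ < lmax / 2 →
        c₁ * x₁ ^ (-μ) ≤ marg x₁ ∧ marg x₁ ≤ c₂ * x₁ ^ (-μ) := by
  have hμ0 : 0 < μ := by linarith
  refine ⟨(μ - 1) / μ / Real.pi * √2 ^ (-(μ + 1)), (1 + 1 / μ) / Real.pi,
    mul_pos (div_pos (div_pos (by linarith) hμ0) Real.pi_pos) (by positivity), by positivity, ?_⟩
  intro lmax hl a ha pmu hpmu pV hpV marg hmarg x₁ hx1 hx2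
  have hx0 : 0 < x₁ := by linarith
  set X := √(lmax ^ 2 - x₁ ^ 2)
  have hxX : x₁ ≤ X := (Real.le_sqrt hx0.le (by nlinarith)).2 (by nlinarith)
  have hmarg' : marg x₁ = a / Real.pi * ∫ t in (0)..X, √(x₁ ^ 2 + t ^ 2) ^ (-(μ + 1)) := by
    rw [hmarg, integral_congr_Ioo_of_le (hx0.le.trans hxX)
      (g := fun t => a / (2 * Real.pi) * √(x₁ ^ 2 + t ^ 2) ^ (-(μ + 1))),
      intervalIntegral.integral_const_mul]
    · field_simp
    · intro t ht
      have htX : t ^ 2 < lmax ^ 2 - x₁ ^ 2 := (Real.lt_sqrt ht.1.le).1 ht.2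
      rw [hpV, hpmu]
      exact radial_levy_density_div_eq ((Real.lt_sqrt zero_le_one).2 (by nlinarith))
        ((Real.sqrt_lt' (by linarith)).2 (by linarith))
  obtain ⟨ha_lower, ha_upper⟩ :=
    ha ▸ one_add_integral_rpow_inv_bounds hμ1 (L := lmax) (by linarith)
  have ha0 : 0 < a := (div_pos (by linarith) hμ0).trans_le ha_lower
  have hJ_lower := sqrt_two_rpow_mul_rpow_le_integral (μ := μ) (by linarith) hx0 hxX
  have hJ_upper := integral_sqrt_sq_add_sq_rpow_le hμ0 hx0 hxX
  rw [hmarg', mul_assoc]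
  constructor
  · gcongr
  · calc _ ≤ 1 / Real.pi * ((1 + 1 / μ) * x₁ ^ (-μ)) := by
          gcongr
          exact (by positivity : (0 : ℝ) ≤ _).trans hJ_lower
      _ = _ := by ring

/-- The projection of a two-dimensional Lévy step on a coordinate axis is again
Lévy-distributed with the same exponent: for an isotropic vector `V` in `ℝ²` whose
length has density `p^μ` (`= a` on `[0,1]`, `a ℓ^{−μ}` on `(1, ℓ_max)`, `0` beyond),
the planar density is `p^V(x) = p^μ(‖x‖)/(2π‖x‖)` and the marginal density of `|V₁|`,
`p^{|V₁|}(x₁) = 2∫₀^{√(ℓ_max²−x₁²)} p^V(x₁,x₂) dx₂`, satisfies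
`p^{|V₁|}(x₁) = Θ(x₁^{−μ})` for `x₁ ∈ (1, ℓ_max/2)`, with constants depending
only on `μ`. -/
theorem stmt_11 (μ : ℝ) (hμ1 : 1 < μ) (hμ3 : μ ≤ 3) :
    ∃ c₁ c₂ : ℝ, 0 < c₁ ∧ 0 < c₂ ∧
      ∀ (lmax : ℝ), 2 < lmax →
      ∀ a : ℝ, a = (1 + ∫ t in (1)..lmax, t ^ (-μ))⁻¹ →
      ∀ pmu : ℝ → ℝ, (∀ ℓ : ℝ, pmu ℓ =
          if ℓ < 0 then 0 else if ℓ ≤ 1 then a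
            else if ℓ < lmax then a * ℓ ^ (-μ) else 0) →
      ∀ pV : ℝ → ℝ → ℝ, (∀ x₁ x₂ : ℝ, pV x₁ x₂ =
          pmu (Real.sqrt (x₁ ^ 2 + x₂ ^ 2)) /
            (2 * Real.pi * Real.sqrt (x₁ ^ 2 + x₂ ^ 2))) →
      ∀ marg : ℝ → ℝ, (∀ x₁ : ℝ, marg x₁ =
          2 * ∫ x₂ in (0)..Real.sqrt (lmax ^ 2 - x₁ ^ 2), pV x₁ x₂) →
      ∀ x₁ : ℝ, 1 < x₁ → x₁ < lmax / 2 →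
        c₁ * x₁ ^ (-μ) ≤ marg x₁ ∧ marg x₁ ≤ c₂ * x₁ ^ (-μ) :=
  stmt_11_general μ hμ1
end
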